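/- Let G be a group, K a normal subgroup of G, N = {N_i} an N-series of G, R a commutative ring and n ≥ 1. Let πN denote the N-series {N_i·K/K} of G/K. Then: (a) the map P_n(π): P_{n,R}^N(G,K) → P_{n,R}^{πN}(G/K), sending the class of a−1 (a ∈ G) to the class of aK−1, is a well-defined surjective homomorphism; (b) the map K·N_{n+1} → P_{n,R}^N(G,K), k ↦ class of (k−1), induces a well-defined homomorphism on the abelian group K·N_{n+1}/([K,K]·N_{n+1}), and the kernel of P_n(π) equals the image of the R-linear extension R ⊗_ℤ (K·N_{n+1}/([K,K]·N_{n+1})) → P_{n,R}^N(G,K) of this homomorphism. That is, the sequence R ⊗ (K·N_{n+1}/[K,K]·N_{n+1}) → P_{n,R}^N(G,K) → P_{n,R}^{πN}(G/K) → 0 is exact. -/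

import Mathlib

open MonoidAlgebra
open scoped commutatorElement

/-- An N-series of a group `G`: a descending chain `G = N 1 ⊇ N 2 ⊇ ⋯` of subgroups
with `[N i, N j] ⊆ N (i+j)`.  (The value `N 0` is irrelevant.) -/
def IsNSeries (G : Type*) [Group G] (N : ℕ → Subgroup G) : Prop :=
  N 1 = ⊤ ∧ (∀ i, 1 ≤ i → N (i + 1) ≤ N i) ∧
    ∀ i j : ℕ, 1 ≤ i → 1 ≤ j → ∀ a b : G, a ∈ N i → b ∈ N j → ⁅a, b⁆ ∈ N (i + j)

/-- The `R`-submodule `I_R(K)·I_R(G)` of `R(G)` spanned by the elements `(k-1)(g-1)`,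
`k ∈ K`, `g ∈ G`. -/
noncomputable def relAugMulKG (R : Type*) [CommRing R] {G : Type*} [Group G]
    (K : Subgroup G) : Submodule R (MonoidAlgebra R G) :=
  Submodule.span R {x | ∃ k ∈ K, ∃ g : G, x = (of R G k - 1) * (of R G g - 1)}

/-- The `R`-submodule `I_{R,N}^n(G)` of `R(G)` spanned by all products
`(a₁-1)⋯(a_r-1)` with `aᵢ ∈ N kᵢ` and `k₁+⋯+k_r ≥ n`. -/
noncomputable def nSeriesPow (R : Type*) [CommRing R] {G : Type*} [Group G]
    (N : ℕ → Subgroup G) (n : ℕ) : Submodule R (MonoidAlgebra R G) :=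
  Submodule.span R {x | ∃ l : List (G × ℕ),
    (∀ p ∈ l, 1 ≤ p.2 ∧ p.1 ∈ N p.2) ∧ n ≤ (l.map Prod.snd).sum ∧
    x = (l.map fun p => of R G p.1 - 1).prod}

/-- The augmentation ideal `I_R(G)` of `R(G)`, as the `R`-submodule spanned by the
elements `g - 1`. -/
noncomputable def augSubmodule (R : Type*) [CommRing R] (G : Type*) [Group G] :
    Submodule R (MonoidAlgebra R G) :=
  Submodule.span R {x | ∃ g : G, x = of R G g - 1}

/-- The relative polynomial group
`P_{n,R}^N(G,K) = I_R(G)/(I_R(K)I_R(G) + I_{R,N}^{n+1}(G))`. -/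
noncomputable abbrev relPoly (R : Type*) [CommRing R] (G : Type*) [Group G]
    (K : Subgroup G) (N : ℕ → Subgroup G) (n : ℕ) :=
  augSubmodule R G ⧸
    Submodule.comap (augSubmodule R G).subtype (relAugMulKG R K + nSeriesPow R N (n + 1))

/-- The canonical map `G → P_{n,R}^N(G,K)`, `a ↦ class of (a - 1)`. -/
noncomputable def relPolyMk (R : Type*) [CommRing R] {G : Type*} [Group G]
    (K : Subgroup G) (N : ℕ → Subgroup G) (n : ℕ) (a : G) : relPoly R G K N n :=
  Submodule.Quotient.mk ⟨of R G a - 1, Submodule.subset_span ⟨a, rfl⟩⟩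

/-!
The algebra map `π : R(G) → R(G/K)` sends `I_R(G)`, `I_R(K)I_R(G)` and `I_{R,N}^{n+1}(G)` onto
`I_R(G/K)`, `0` and `I_{R,πN}^{n+1}(G/K)`; this gives `P_n(π)` and its surjectivity.
Writing `k ∈ K·N_{n+1}` as `k = ab` with `a ∈ K`, `b ∈ N_{n+1}`, the product `(k-1)(g-1)`
lies in `I_R(K)I_R(G) + I_{R,N}^{n+1}(G)`, so `k ↦ [k-1]` is a homomorphism from `K·N_{n+1}`
to an abelian group, and it kills `[K,K]` and `N_{n+1}`. Finally `ker π` is spanned by the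
`a - b` with `aK = bK`, and `a - b = (k-1)(b-1) + (k-1)` with `k = ab⁻¹ ∈ K`; lifting
`I_{R,πN}^{n+1}(G/K)` back to `I_{R,N}^{n+1}(G)` shows that every class killed by `P_n(π)` is
the class of an `R`-combination of elements `k - 1`, `k ∈ K`.
-/

section Generators

variable (R : Type*) [CommRing R] {G : Type*} [Group G]

lemma of_sub_one_mem_augSubmodule (g : G) : of R G g - 1 ∈ augSubmodule R G :=
  Submodule.subset_span ⟨g, rfl⟩

lemma span_of_sub_one_le_augSubmodule (S : Set G) :
    Submodule.span R {x | ∃ k ∈ S, x = of R G k - 1} ≤ augSubmodule R G :=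
  Submodule.span_le.mpr fun _ ⟨k, _, hx⟩ => hx ▸ of_sub_one_mem_augSubmodule R k

lemma of_sub_one_mem_nSeriesPow {N : ℕ → Subgroup G} {m : ℕ} (hm : 1 ≤ m) {a : G}
    (ha : a ∈ N m) : of R G a - 1 ∈ nSeriesPow R N m :=
  Submodule.subset_span ⟨[(a, m)], by simpa using ⟨hm, ha⟩, by simp, by simp⟩

lemma of_sub_one_mul_mem_nSeriesPow {N : ℕ → Subgroup G} {i j m : ℕ} (hi : 1 ≤ i)
    (hj : 1 ≤ j) (hm : m ≤ i + j) {a b : G} (ha : a ∈ N i) (hb : b ∈ N j) :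
    (of R G a - 1) * (of R G b - 1) ∈ nSeriesPow R N m := by
  refine Submodule.subset_span ⟨[(a, i), (b, j)], ?_, by simpa using hm, by simp⟩
  simp [hi, hj, ha, hb]

lemma relAugMulKG_bot : relAugMulKG R (⊥ : Subgroup G) = ⊥ := by
  refine Submodule.span_eq_bot.mpr ?_
  rintro _ ⟨k, hk, g, rfl⟩
  rw [Subgroup.mem_bot.mp hk, map_one, sub_self, zero_mul]

end Generators

section RelPolyMk

variable (R : Type*) [CommRing R] {G : Type*} [Group G] (K : Subgroup G)
  (N : ℕ → Subgroup G) (n : ℕ)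

lemma relPolyMk_eq_zero_of_mem_nSeries {k : G} (hk : k ∈ N (n + 1)) : relPolyMk R K N n k = 0 :=
  (Submodule.Quotient.mk_eq_zero _).mpr
    (Submodule.mem_sup_right (of_sub_one_mem_nSeriesPow R n.succ_pos hk))

lemma of_sub_one_mul_of_sub_one_mem [K.Normal] (hN : N 1 = ⊤) {k : G}
    (hk : k ∈ K ⊔ N (n + 1)) (g : G) :
    (of R G k - 1) * (of R G g - 1) ∈ relAugMulKG R K + nSeriesPow R N (n + 1) := by
  obtain ⟨a, ha, b, hb, rfl⟩ := Subgroup.mem_sup_of_normal_left.mp hk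
  have hexpand : (of R G (a * b) - 1) * (of R G g - 1) =
      ((of R G a - 1) * (of R G (b * g) - 1) - (of R G a - 1) * (of R G b - 1)) +
        (of R G b - 1) * (of R G g - 1) := by
    simp only [map_mul]; noncomm_ring
  rw [hexpand]
  refine add_mem (Submodule.mem_sup_left (sub_mem ?_ ?_)) (Submodule.mem_sup_right ?_)
  · exact Submodule.subset_span ⟨a, ha, b * g, rfl⟩
  · exact Submodule.subset_span ⟨a, ha, b, rfl⟩
  · exact of_sub_one_mul_mem_nSeriesPow R n.succ_pos le_rfl le_self_add hb (hN ▸ trivial)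

lemma relPolyMk_mul [K.Normal] (hN : N 1 = ⊤) {k : G} (hk : k ∈ K ⊔ N (n + 1)) (g : G) :
    relPolyMk R K N n (k * g) = relPolyMk R K N n k + relPolyMk R K N n g := by
  rw [relPolyMk, relPolyMk, relPolyMk, ← Submodule.Quotient.mk_add, Submodule.Quotient.eq]
  have hdiff : of R G (k * g) - 1 - ((of R G k - 1) + (of R G g - 1)) =
      (of R G k - 1) * (of R G g - 1) := by
    rw [map_mul]; noncomm_ring
  rw [Submodule.mem_comap, Submodule.subtype_apply, Submodule.coe_sub, Submodule.coe_add, hdiff]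
  exact of_sub_one_mul_of_sub_one_mem R K N n hN hk g

noncomputable def relPolyMkHom [K.Normal] (hN : N 1 = ⊤) :
    ↥(K ⊔ N (n + 1)) →* Multiplicative (relPoly R G K N n) :=
  MonoidHom.mk' (fun k => Multiplicative.ofAdd (relPolyMk R K N n k))
    fun k g => relPolyMk_mul R K N n hN k.2 g

lemma relPolyMk_eq_zero_of_mem_commutator_sup [K.Normal] (hN : N 1 = ⊤) {k : G}
    (hk : k ∈ ⁅K, K⁆ ⊔ N (n + 1)) :
    relPolyMk R K N n k = 0 := by
  let φ := relPolyMkHom R K N n hN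
  have hle : ⁅K, K⁆ ⊔ N (n + 1) ≤ φ.ker.map (K ⊔ N (n + 1)).subtype := by
    refine sup_le (Subgroup.commutator_le.mpr fun a ha b hb => ?_) fun b hb => ?_
    · let a' : ↥(K ⊔ N (n + 1)) := ⟨a, Subgroup.mem_sup_left ha⟩
      let b' : ↥(K ⊔ N (n + 1)) := ⟨b, Subgroup.mem_sup_left hb⟩
      refine ⟨⁅a', b'⁆, ?_, rfl⟩
      rw [SetLike.mem_coe, MonoidHom.mem_ker, map_commutatorElement,
        commutatorElement_eq_one_iff_mul_comm, mul_comm]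
    · exact ⟨⟨b, Subgroup.mem_sup_right hb⟩,
        relPolyMk_eq_zero_of_mem_nSeries R K N n hb, rfl⟩
  obtain ⟨k, hk0, rfl⟩ := hle hk
  exact hk0

lemma mk_mem_span_relPolyMk {S : Set G} {v : MonoidAlgebra R G}
    (hv : v ∈ Submodule.span R {x | ∃ k ∈ S, x = of R G k - 1}) :
    (Submodule.Quotient.mk ⟨v, span_of_sub_one_le_augSubmodule R S hv⟩ : relPoly R G K N n) ∈
      Submodule.span R {x | ∃ k ∈ S, x = relPolyMk R K N n k} := by
  induction hv using Submodule.span_induction with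
  | mem x hx => obtain ⟨k, hk, rfl⟩ := hx; exact Submodule.subset_span ⟨k, hk, rfl⟩
  | zero => exact zero_mem _
  | add x y _ _ hx hy => exact add_mem hx hy
  | smul r x _ hx => exact Submodule.smul_mem _ r hx

end RelPolyMk

lemma MonoidAlgebra.ker_mapDomainLinearMap_le (R : Type*) [Ring R] {M M' : Type*}
    [Nonempty M] (f : M → M') :
    LinearMap.ker (mapDomainLinearMap R R f) ≤
      Submodule.span R {x | ∃ a b, f a = f b ∧ x = single a (1 : R) - single b 1} := by
  set D := Submodule.span R {x | ∃ a b, f a = f b ∧ x = single a (1 : R) - single b 1}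
  -- `t` identifies points with the same image under `f`, so `y - t y ∈ D` while `t x = 0`.
  set t := Function.invFun f ∘ f
  have hsub_mem : ∀ y : MonoidAlgebra R M, y - mapDomainLinearMap R R t y ∈ D := by
    intro y
    induction y using MonoidAlgebra.induction_linear with
    | zero => simp
    | add x y hx hy => simpa [add_sub_add_comm] using add_mem hx hy
    | single m r =>
      have hgen : single m (1 : R) - single (t m) 1 ∈ D :=
        Submodule.subset_span ⟨m, t m, (Function.invFun_eq ⟨m, rfl⟩).symm, rfl⟩
      convert Submodule.smul_mem D r hgen using 1
      simp [t, smul_sub, MonoidAlgebra.smul_single]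
  intro x hx
  have htx : mapDomainLinearMap R R t x = 0 := by
    rw [mapDomainLinearMap_comp, LinearMap.comp_apply, LinearMap.mem_ker.mp hx, map_zero]
  simpa [htx] using hsub_mem x

section MapDomain

variable (R : Type*) [CommRing R] {G H : Type*} [Group G] [Group H] (φ : G →* H)

lemma mapDomainAlgHom_of_sub_one (g : G) :
    mapDomainAlgHom R R φ (of R G g - 1) = of R H (φ g) - 1 := by
  rw [map_sub, map_one]
  simp [MonoidAlgebra.of_apply]

lemma map_augSubmodule_le :
    (augSubmodule R G).map (mapDomainAlgHom R R φ).toLinearMap ≤ augSubmodule R H := by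
  refine Submodule.map_span_le _ _ _ |>.mpr ?_
  rintro _ ⟨g, rfl⟩
  rw [AlgHom.toLinearMap_apply, mapDomainAlgHom_of_sub_one]
  exact of_sub_one_mem_augSubmodule R (φ g)

lemma map_augSubmodule (hφ : Function.Surjective φ) :
    (augSubmodule R G).map (mapDomainAlgHom R R φ).toLinearMap = augSubmodule R H := by
  refine le_antisymm (map_augSubmodule_le R φ) (Submodule.span_le.mpr ?_)
  rintro _ ⟨h, rfl⟩
  obtain ⟨g, rfl⟩ := hφ h
  exact ⟨_, of_sub_one_mem_augSubmodule R g, mapDomainAlgHom_of_sub_one R φ g⟩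

lemma relAugMulKG_le_ker {K : Subgroup G} (hK : K ≤ φ.ker) :
    relAugMulKG R K ≤ LinearMap.ker (mapDomainAlgHom R R φ).toLinearMap := by
  refine Submodule.span_le.mpr ?_
  rintro _ ⟨k, hk, g, rfl⟩
  rw [SetLike.mem_coe, LinearMap.mem_ker, AlgHom.toLinearMap_apply, map_mul,
    mapDomainAlgHom_of_sub_one, MonoidHom.mem_ker.mp (hK hk), map_one, sub_self, zero_mul]

lemma exists_list_map_eq_of_mem_map (N : ℕ → Subgroup G) :
    ∀ l' : List (H × ℕ), (∀ p ∈ l', p.1 ∈ (N p.2).map φ) →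
      ∃ l : List (G × ℕ), (∀ p ∈ l, p.1 ∈ N p.2) ∧ l.map (Prod.map φ id) = l'
  | [], _ => ⟨[], by simp, rfl⟩
  | p :: l', h => by
    obtain ⟨a, ha, hap⟩ := h p List.mem_cons_self
    obtain ⟨l, hl, rfl⟩ :=
      exists_list_map_eq_of_mem_map N l' fun q hq => h q (List.mem_cons_of_mem p hq)
    exact ⟨(a, p.2) :: l, List.forall_mem_cons.mpr ⟨ha, hl⟩, by simp [hap]⟩

lemma mapDomainAlgHom_list_prod (l : List (G × ℕ)) :
    mapDomainAlgHom R R φ (l.map fun p => of R G p.1 - 1).prod =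
      ((l.map (Prod.map φ id)).map fun p => of R H p.1 - 1).prod := by
  simp only [map_list_prod, List.map_map, Function.comp_def, mapDomainAlgHom_of_sub_one,
    Prod.map_fst]

lemma map_nSeriesPow (N : ℕ → Subgroup G) (m : ℕ) :
    (nSeriesPow R N m).map (mapDomainAlgHom R R φ).toLinearMap =
      nSeriesPow R (fun i => (N i).map φ) m := by
  unfold nSeriesPow
  rw [Submodule.map_span]
  congr 1
  ext x
  constructor
  · rintro ⟨_, ⟨l, hl, hsum, rfl⟩, rfl⟩
    refine ⟨l.map (Prod.map φ id), ?_, by simpa [Function.comp_def] using hsum,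
      mapDomainAlgHom_list_prod R φ l⟩
    simp only [List.mem_map]
    rintro _ ⟨p, hp, rfl⟩
    exact ⟨(hl p hp).1, Subgroup.mem_map_of_mem φ (hl p hp).2⟩
  · rintro ⟨l', hl', hsum, rfl⟩
    obtain ⟨l, hl, rfl⟩ := exists_list_map_eq_of_mem_map φ N l' fun p hp => (hl' p hp).2
    refine ⟨_, ⟨l, fun p hp => ⟨(hl' _ (List.mem_map_of_mem hp)).1, hl p hp⟩,
      by simpa [Function.comp_def] using hsum, rfl⟩, mapDomainAlgHom_list_prod R φ l⟩

lemma ker_mapDomainAlgHom_mk'_le (K : Subgroup G) [K.Normal] :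
    LinearMap.ker (mapDomainAlgHom R R (QuotientGroup.mk' K)).toLinearMap ≤
      relAugMulKG R K ⊔ Submodule.span R {x | ∃ k ∈ K, x = of R G k - 1} := by
  refine (MonoidAlgebra.ker_mapDomainLinearMap_le R (QuotientGroup.mk' K)).trans ?_
  refine Submodule.span_le.mpr ?_
  rintro _ ⟨a, b, hab, rfl⟩
  have hk : a / b ∈ K := QuotientGroup.eq_iff_div_mem.mp hab
  have hdiv : of R G (a / b) * of R G b = of R G a := by rw [← map_mul, div_mul_cancel]
  have hexpand : single a (1 : R) - single b 1 =
      (of R G (a / b) - 1) * (of R G b - 1) + (of R G (a / b) - 1) := by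
    rw [← MonoidAlgebra.of_apply, ← MonoidAlgebra.of_apply, ← hdiv]
    noncomm_ring
  rw [hexpand]
  exact add_mem (Submodule.mem_sup_left (Submodule.subset_span ⟨_, hk, b, rfl⟩))
    (Submodule.mem_sup_right (Submodule.subset_span ⟨_, hk, rfl⟩))

end MapDomain

section RelPolyMap

variable (R : Type*) [CommRing R] {G H : Type*} [Group G] [Group H]

lemma map_relAugMulKG_add_nSeriesPow_le (φ : G →* H) {K : Subgroup G} (hK : K ≤ φ.ker)
    (N : ℕ → Subgroup G) (m : ℕ) :
    (relAugMulKG R K + nSeriesPow R N m).map (mapDomainAlgHom R R φ).toLinearMap ≤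
      relAugMulKG R ⊥ + nSeriesPow R (fun i => (N i).map φ) m := by
  rw [Submodule.add_eq_sup, Submodule.add_eq_sup, relAugMulKG_bot, bot_sup_eq, Submodule.map_sup,
    map_nSeriesPow]
  exact sup_le (Submodule.map_le_iff_le_comap.mpr
    ((relAugMulKG_le_ker R φ hK).trans (LinearMap.ker_le_comap _))) le_rfl

/-- The paper's `P_n(π)`, for any `φ` killing `K`. -/
noncomputable def relPolyMap (φ : G →* H) {K : Subgroup G} (hK : K ≤ φ.ker)
    (N : ℕ → Subgroup G) (n : ℕ) :
    relPoly R G K N n →ₗ[R] relPoly R H ⊥ (fun i => (N i).map φ) n :=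
  Submodule.mapQ _ _
    ((mapDomainAlgHom R R φ).toLinearMap.restrict fun x hx =>
      map_augSubmodule_le R φ ⟨x, hx, rfl⟩)
    fun x hx => map_relAugMulKG_add_nSeriesPow_le R φ hK N (n + 1) ⟨x, hx, rfl⟩

lemma relPolyMap_relPolyMk (φ : G →* H) {K : Subgroup G} (hK : K ≤ φ.ker)
    (N : ℕ → Subgroup G) (n : ℕ) (a : G) :
    relPolyMap R φ hK N n (relPolyMk R K N n a) =
      relPolyMk R ⊥ (fun i => (N i).map φ) n (φ a) :=
  congrArg Submodule.Quotient.mk (Subtype.ext (mapDomainAlgHom_of_sub_one R φ a))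

lemma relPolyMap_surjective {φ : G →* H} (hφ : Function.Surjective φ) {K : Subgroup G}
    (hK : K ≤ φ.ker) (N : ℕ → Subgroup G) (n : ℕ) :
    Function.Surjective (relPolyMap R φ hK N n) := by
  rintro ⟨y, hy⟩
  obtain ⟨x, hx, rfl⟩ := (map_augSubmodule R φ hφ).ge hy
  exact ⟨Submodule.Quotient.mk ⟨x, hx⟩, rfl⟩

end RelPolyMap

section Kernel

variable (R : Type*) [CommRing R] {G : Type*} [Group G] (K : Subgroup G) [K.Normal]
  (N : ℕ → Subgroup G) (n : ℕ)

lemma ker_relPolyMap_mk' :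
    LinearMap.ker (relPolyMap R (QuotientGroup.mk' K) (QuotientGroup.ker_mk' K).ge N n) =
      Submodule.span R {x | ∃ k ∈ K ⊔ N (n + 1), x = relPolyMk R K N n k} := by
  set π := (mapDomainAlgHom R R (QuotientGroup.mk' K)).toLinearMap
  apply le_antisymm
  · intro x hx
    obtain ⟨⟨ξ, hξ⟩, rfl⟩ := Submodule.Quotient.mk_surjective _ x
    have hπξ : π ξ ∈ nSeriesPow R (fun i => (N i).map (QuotientGroup.mk' K)) (n + 1) := by
      have h0 := (Submodule.Quotient.mk_eq_zero _).mp hx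
      rw [relAugMulKG_bot, Submodule.add_eq_sup, bot_sup_eq] at h0
      exact h0
    obtain ⟨η, hη, hπη⟩ := (map_nSeriesPow R _ N (n + 1)).ge hπξ
    have hξη :
        ξ - η ∈ relAugMulKG R K ⊔ Submodule.span R {x | ∃ k ∈ K, x = of R G k - 1} :=
      ker_mapDomainAlgHom_mk'_le R K (by rw [LinearMap.mem_ker, map_sub, hπη, sub_self])
    obtain ⟨u, hu, v, hv, huv⟩ := Submodule.mem_sup.mp hξη
    have hmk : (Submodule.Quotient.mk ⟨ξ, hξ⟩ : relPoly R G K N n) =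
        Submodule.Quotient.mk ⟨v, span_of_sub_one_le_augSubmodule R (K : Set G) hv⟩ := by
      have hdiff : ξ - v = u + η := by
        rw [← sub_add_cancel ξ η, ← huv]; abel
      rw [Submodule.Quotient.eq, Submodule.mem_comap, Submodule.subtype_apply,
        Submodule.coe_sub, hdiff]
      exact add_mem (Submodule.mem_sup_left hu) (Submodule.mem_sup_right hη)
    rw [hmk]
    refine Submodule.span_mono ?_ (mk_mem_span_relPolyMk R K N n (S := K) hv)
    rintro _ ⟨k, hk, rfl⟩
    exact ⟨k, Subgroup.mem_sup_left hk, rfl⟩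
  · refine Submodule.span_le.mpr ?_
    rintro _ ⟨k, hk, rfl⟩
    obtain ⟨a, ha, b, hb, rfl⟩ := Subgroup.mem_sup_of_normal_left.mp hk
    have ha1 : QuotientGroup.mk' K a = 1 := (QuotientGroup.ker_mk' K).ge ha
    rw [SetLike.mem_coe, LinearMap.mem_ker, relPolyMap_relPolyMk, map_mul, ha1, one_mul]
    exact relPolyMk_eq_zero_of_mem_nSeries R ⊥ _ n (Subgroup.mem_map_of_mem _ hb)

end Kernel

theorem relPoly_exact_sequence_general (R : Type*) [CommRing R] {G : Type*} [Group G]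
    (K : Subgroup G) [K.Normal] (N : ℕ → Subgroup G) (hN : IsNSeries G N)
    (n : ℕ) :
    ∃ f : relPoly R G K N n →ₗ[R]
        relPoly R (G ⧸ K) ⊥ (fun i => (N i).map (QuotientGroup.mk' K)) n,
      (∀ a : G, f (relPolyMk R K N n a) =
        relPolyMk R ⊥ (fun i => (N i).map (QuotientGroup.mk' K)) n (QuotientGroup.mk' K a)) ∧
      Function.Surjective f ∧
      (∀ k k' : G, k ∈ K ⊔ N (n + 1) → k' ∈ K ⊔ N (n + 1) →
        relPolyMk R K N n (k * k') = relPolyMk R K N n k + relPolyMk R K N n k') ∧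
      (∀ k : G, k ∈ ⁅K, K⁆ ⊔ N (n + 1) → relPolyMk R K N n k = 0) ∧
      LinearMap.ker f =
        Submodule.span R {x | ∃ k ∈ K ⊔ N (n + 1), x = relPolyMk R K N n k} :=
  ⟨relPolyMap R (QuotientGroup.mk' K) (QuotientGroup.ker_mk' K).ge N n,
    relPolyMap_relPolyMk R _ _ N n,
    relPolyMap_surjective R (QuotientGroup.mk'_surjective K) _ N n,
    fun _ k' hk _ => relPolyMk_mul R K N n hN.1 hk k',
    fun _ hk => relPolyMk_eq_zero_of_mem_commutator_sup R K N n hN.1 hk,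
    ker_relPolyMap_mk' R K N n⟩

/-- **Lemma 2.5**: for a normal subgroup `K ⊴ G`, an N-series `N` of `G` and `n ≥ 1`,
the sequence `R ⊗ (K·N_{n+1}/[K,K]·N_{n+1}) → P_{n,R}^N(G,K) → P_{n,R}^{πN}(G/K) → 0`
is exact: there is a (unique) homomorphism `f = P_n(π)` with `f(class (a-1)) =
class (aK-1)`; it is surjective; the map `k ↦ class (k-1)` on `K·N_{n+1}` is
multiplicative-to-additive and vanishes on `[K,K]·N_{n+1}` (so it is well defined on the
quotient `K·N_{n+1}/[K,K]·N_{n+1}`); and `ker f` is the image of its `R`-linear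
extension, i.e. the `R`-span of the classes of `k - 1`, `k ∈ K·N_{n+1}`. -/
theorem relPoly_exact_sequence (R : Type*) [CommRing R] {G : Type*} [Group G]
    (K : Subgroup G) [K.Normal] (N : ℕ → Subgroup G) (hN : IsNSeries G N)
    (n : ℕ) (hn : 1 ≤ n) :
    ∃ f : relPoly R G K N n →ₗ[R]
        relPoly R (G ⧸ K) ⊥ (fun i => (N i).map (QuotientGroup.mk' K)) n,
      (∀ a : G, f (relPolyMk R K N n a) =
        relPolyMk R ⊥ (fun i => (N i).map (QuotientGroup.mk' K)) n (QuotientGroup.mk' K a)) ∧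
      Function.Surjective f ∧
      (∀ k k' : G, k ∈ K ⊔ N (n + 1) → k' ∈ K ⊔ N (n + 1) →
        relPolyMk R K N n (k * k') = relPolyMk R K N n k + relPolyMk R K N n k') ∧
      (∀ k : G, k ∈ ⁅K, K⁆ ⊔ N (n + 1) → relPolyMk R K N n k = 0) ∧
      LinearMap.ker f =
        Submodule.span R {x | ∃ k ∈ K ⊔ N (n + 1), x = relPolyMk R K N n k} :=
  relPoly_exact_sequence_general R K N hN n
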